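/- arXiv:2402.07810 — 4 statements merged into one kernel-verified Lean document; each statement's English description precedes it below -/
import Mathlib

section
/- Let b ∈ ℝ^N be a vector of Euclidean norm 1 and let L ⊂ ℝ^N be an m-dimensional linear subspace. Then the average over all 2^N · N! signed permutations (π,ε) of the Euclidean length of the orthogonal projection of (π,ε)b onto L does not exceed √m/√N. -/
open scoped BigOperators

noncomputable section

/-- The action of a signed permutation `(π, ε)` on a vector `b ∈ ℝ^N`:
`((π,ε)b)_i = ε_i b_{π(i)}`. -/
def signedPermAct {N : ℕ} (π : Equiv.Perm (Fin N)) (ε : Fin N → ℤˣ)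
    (b : EuclideanSpace ℝ (Fin N)) : EuclideanSpace ℝ (Fin N) :=
  WithLp.toLp 2 (fun i => ((ε i : ℤ) : ℝ) * b (π i))

/-!
Averaging over the signed permutations first over the signs and then over the permutations,
`∑ ⟪v, (π,ε)b⟫² = 2^N (N-1)! ‖v‖² ‖b‖²` for every `v`: the signs kill the cross terms and the
permutations spread `b` evenly over the coordinates. Summing over an orthonormal basis of `L`
gives mean square `m/N` for `‖P_L (π,ε)b‖`, and the mean is at most the root mean square.
-/

open Finset

section Signs

variable {ι : Type*} [Fintype ι] [DecidableEq ι]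

theorem sum_units_int_mul_units_int (i j : ι) :
    ∑ ε : ι → ℤˣ, ((ε i : ℤ) : ℝ) * ((ε j : ℤ) : ℝ) = if i = j then 2 ^ Fintype.card ι else 0 := by
  split_ifs with hij
  · subst hij
    simp [← Int.cast_mul, ← Units.val_mul, Int.units_mul_self, Fintype.card_units_int]
  · -- flipping the sign `ε i` is a bijection that negates every summand
    set flipSign : ι → ℤˣ := Pi.mulSingle i (-1)
    have hflip := Equiv.sum_comp (Equiv.mulLeft flipSign)
      (fun ε : ι → ℤˣ => ((ε i : ℤ) : ℝ) * ((ε j : ℤ) : ℝ))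
    simp only [Equiv.coe_mulLeft, Pi.mul_apply, flipSign, Pi.mulSingle_eq_same,
      Pi.mulSingle_eq_of_ne' hij, one_mul, neg_mul, Units.val_neg, Int.cast_neg,
      sum_neg_distrib] at hflip
    linarith

theorem sum_sq_sum_units_int_mul (w : ι → ℝ) :
    ∑ ε : ι → ℤˣ, (∑ i, ((ε i : ℤ) : ℝ) * w i) ^ 2 = 2 ^ Fintype.card ι * ∑ i, w i ^ 2 := by
  calc ∑ ε : ι → ℤˣ, (∑ i, ((ε i : ℤ) : ℝ) * w i) ^ 2
      = ∑ ε : ι → ℤˣ, ∑ i, ∑ j, w i * w j * (((ε i : ℤ) : ℝ) * ((ε j : ℤ) : ℝ)) :=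
        sum_congr rfl fun ε _ => by
          rw [sq, sum_mul_sum]
          exact sum_congr rfl fun i _ => sum_congr rfl fun j _ => by ring
    _ = ∑ i, ∑ j, w i * w j * ∑ ε : ι → ℤˣ, ((ε i : ℤ) : ℝ) * ((ε j : ℤ) : ℝ) := by
        simp only [mul_sum]
        rw [sum_comm]
        exact sum_congr rfl fun i _ => sum_comm
    _ = 2 ^ Fintype.card ι * ∑ i, w i ^ 2 := by
        simp only [sum_units_int_mul_units_int, mul_ite, mul_zero, sum_ite_eq, mem_univ,
          if_true, mul_sum]
        exact sum_congr rfl fun i _ => by ring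

end Signs

theorem card_nsmul_sum_perm_apply {ι M : Type*} [Fintype ι] [DecidableEq ι] [AddCommMonoid M]
    (f : ι → M) (i : ι) :
    Fintype.card ι • ∑ σ : Equiv.Perm ι, f (σ i) = (Fintype.card ι).factorial • ∑ j, f j := by
  have hconst : ∀ k, ∑ σ : Equiv.Perm ι, f (σ k) = ∑ σ : Equiv.Perm ι, f (σ i) := fun k => by
    rw [eq_comm]
    simpa using Equiv.sum_comp (Equiv.mulRight (Equiv.swap k i)) (fun σ => f (σ k))
  calc Fintype.card ι • ∑ σ : Equiv.Perm ι, f (σ i)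
      = ∑ k, ∑ σ : Equiv.Perm ι, f (σ k) := by simp [hconst]
    _ = ∑ σ : Equiv.Perm ι, ∑ j, f j := by
        rw [sum_comm]
        exact sum_congr rfl fun σ _ => Equiv.sum_comp σ f
    _ = (Fintype.card ι).factorial • ∑ j, f j := by simp [Fintype.card_perm]

theorem inner_signedPermAct {N : ℕ} (π : Equiv.Perm (Fin N)) (ε : Fin N → ℤˣ)
    (v b : EuclideanSpace ℝ (Fin N)) :
    inner ℝ v (signedPermAct π ε b) = ∑ i, ((ε i : ℤ) : ℝ) * (v i * b (π i)) := by
  simp only [signedPermAct, PiLp.inner_apply, RCLike.inner_apply, conj_trivial]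
  exact sum_congr rfl fun i _ => by ring

theorem card_mul_sum_inner_signedPermAct_sq {N : ℕ} (v b : EuclideanSpace ℝ (Fin N)) :
    (N : ℝ) * ∑ π : Equiv.Perm (Fin N), ∑ ε : Fin N → ℤˣ, inner ℝ v (signedPermAct π ε b) ^ 2 =
      2 ^ N * N.factorial * ‖v‖ ^ 2 * ‖b‖ ^ 2 := by
  have hperm : ∀ i, (N : ℝ) * ∑ π : Equiv.Perm (Fin N), b (π i) ^ 2 = N.factorial * ‖b‖ ^ 2 := by
    intro i
    simpa [EuclideanSpace.real_norm_sq_eq, nsmul_eq_mul] using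
      card_nsmul_sum_perm_apply (fun j => b j ^ 2) i
  simp only [inner_signedPermAct, sum_sq_sum_units_int_mul, Fintype.card_fin]
  calc (N : ℝ) * ∑ π : Equiv.Perm (Fin N), 2 ^ N * ∑ i, (v i * b (π i)) ^ 2
      = 2 ^ N * ∑ i, v i ^ 2 * ((N : ℝ) * ∑ π : Equiv.Perm (Fin N), b (π i) ^ 2) := by
        simp only [mul_pow, mul_sum]
        rw [sum_comm]
        exact sum_congr rfl fun i _ => sum_congr rfl fun π _ => by ring
    _ = 2 ^ N * N.factorial * ‖v‖ ^ 2 * ‖b‖ ^ 2 := by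
        rw [EuclideanSpace.real_norm_sq_eq v]
        simp only [hperm, mul_sum, sum_mul]
        exact sum_congr rfl fun i _ => by ring

theorem norm_orthogonalProjectionOnto_sq {E ι : Type*} [NormedAddCommGroup E]
    [InnerProductSpace ℝ E] [Fintype ι] {K : Submodule ℝ E} [K.HasOrthogonalProjection]
    (u : OrthonormalBasis ι ℝ K) (x : E) :
    ‖K.orthogonalProjectionOnto x‖ ^ 2 = ∑ k, inner ℝ (u k : E) x ^ 2 := by
  simp only [← u.sum_sq_inner_right, Submodule.inner_orthogonalProjectionOnto_eq_of_mem_left]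

theorem card_mul_sum_norm_orthogonalProjectionOnto_signedPermAct_sq {N : ℕ}
    (L : Submodule ℝ (EuclideanSpace ℝ (Fin N))) (b : EuclideanSpace ℝ (Fin N)) :
    (N : ℝ) * ∑ π : Equiv.Perm (Fin N), ∑ ε : Fin N → ℤˣ,
        ‖L.orthogonalProjectionOnto (signedPermAct π ε b)‖ ^ 2 =
      Module.finrank ℝ L * (2 ^ N * N.factorial * ‖b‖ ^ 2) := by
  let u := stdOrthonormalBasis ℝ L
  calc (N : ℝ) * ∑ π : Equiv.Perm (Fin N), ∑ ε : Fin N → ℤˣ,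
        ‖L.orthogonalProjectionOnto (signedPermAct π ε b)‖ ^ 2
      = ∑ π : Equiv.Perm (Fin N), ∑ ε : Fin N → ℤˣ, ∑ k,
          (N : ℝ) * inner ℝ (u k : EuclideanSpace ℝ (Fin N)) (signedPermAct π ε b) ^ 2 := by
        simp only [norm_orthogonalProjectionOnto_sq u, mul_sum]
    _ = ∑ k, (N : ℝ) * ∑ π : Equiv.Perm (Fin N), ∑ ε : Fin N → ℤˣ,
          inner ℝ (u k : EuclideanSpace ℝ (Fin N)) (signedPermAct π ε b) ^ 2 := by
        simp only [mul_sum]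
        conv_rhs => rw [sum_comm]
        exact sum_congr rfl fun π _ => sum_comm
    _ = Module.finrank ℝ L * (2 ^ N * N.factorial * ‖b‖ ^ 2) := by
        simp [card_mul_sum_inner_signedPermAct_sq, Submodule.norm_coe, u.orthonormal.1 _]

theorem sum_div_card_le_sqrt_sum_sq_div_card {α : Type*} [Fintype α] (f : α → ℝ) :
    (∑ x, f x) / Fintype.card α ≤ √((∑ x, f x ^ 2) / Fintype.card α) := by
  refine Real.le_sqrt_of_sq_le ?_
  rcases (Fintype.card α).eq_zero_or_pos with hα | hα
  · simp [hα]
  · rw [div_pow, div_le_div_iff₀ (by positivity) (by positivity), sq (Fintype.card α : ℝ),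
      ← mul_assoc]
    gcongr
    simpa [mul_comm] using sq_sum_le_card_mul_sum_sq (s := univ) (f := f)

/-- **Lemma 3.2.** Let `b ∈ ℝ^N` be a unit vector and `L ⊆ ℝ^N` an `m`-dimensional linear
subspace. Then the average over all `2^N · N!` signed permutations `(π, ε)` of the
Euclidean length of the orthogonal projection of `(π,ε)b` onto `L` does not exceed
`√m/√N`. -/
theorem average_norm_proj_signed_perm_le (N m : ℕ) (b : EuclideanSpace ℝ (Fin N))
    (hb : ‖b‖ = 1) (L : Submodule ℝ (EuclideanSpace ℝ (Fin N)))
    (hL : Module.finrank ℝ L = m) :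
    (∑ π : Equiv.Perm (Fin N), ∑ ε : Fin N → ℤˣ,
        ‖Submodule.orthogonalProjection L (signedPermAct π ε b)‖) / (2 ^ N * N.factorial) ≤
      Real.sqrt m / Real.sqrt N := by
  have hN : (N : ℝ) ≠ 0 := by
    rintro hN
    obtain rfl : N = 0 := by exact_mod_cast hN
    simp [Subsingleton.elim b 0] at hb
  have hcard : Fintype.card (Equiv.Perm (Fin N) × (Fin N → ℤˣ)) = 2 ^ N * N.factorial := by
    simp [Fintype.card_perm, Fintype.card_units_int, mul_comm]
  have hsq := card_mul_sum_norm_orthogonalProjectionOnto_signedPermAct_sq L b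
  rw [hb, hL] at hsq
  calc _ = (∑ g : Equiv.Perm (Fin N) × (Fin N → ℤˣ),
          ‖L.orthogonalProjectionOnto (signedPermAct g.1 g.2 b)‖) /
          Fintype.card (Equiv.Perm (Fin N) × (Fin N → ℤˣ)) := by
        rw [Fintype.sum_prod_type, hcard]; push_cast; rfl
    _ ≤ _ := sum_div_card_le_sqrt_sum_sq_div_card _
    _ = √((m : ℝ) / N) := by
        rw [Fintype.sum_prod_type, hcard]
        congr 1
        push_cast
        field_simp
        linear_combination hsq
    _ = √m / √N := Real.sqrt_div' _ (Nat.cast_nonneg N)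
end
end

section
/- Let A be an m×N real matrix whose rows a_1,…,a_m form an orthonormal system, and let B be an N×m real matrix whose columns b_1,…,b_m form an orthonormal system. For a signed permutation s = (π,ε) let sB denote the matrix obtained by applying s to each column of B. Then the average over all 2^N · N! signed permutations s of |det(A · (sB))| does not exceed 1/√(N choose m). Equivalently, if L_1 = span{a_1,…,a_m}, L_2 = span{b_1,…,b_m}, and θ(π,ε) is the ratio vol(P(π,ε)Ω)/vol(Ω) for the orthogonal projection P(π,ε): L_1 → (π,ε)L_2 and any bounded domain Ω ⊂ L_1, then (1/(2^N N!)) Σ_{(π,ε)} θ(π,ε) ≤ 1/√(N choose m). -/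
open scoped BigOperators Matrix

noncomputable section

/-- The result of applying the signed permutation `(π, ε)` to every column of an `N × m`
matrix `B`: the column `b` is replaced by `(π,ε)b`, where `((π,ε)b)_i = ε_i b_{π(i)}`. -/
def signedPermCols {N m : ℕ} (π : Equiv.Perm (Fin N)) (ε : Fin N → ℤˣ)
    (B : Matrix (Fin N) (Fin m) ℝ) : Matrix (Fin N) (Fin m) ℝ :=
  Matrix.of fun i j => ((ε i : ℤ) : ℝ) * B (π i) j

namespace Lemma33Aux

open Matrix Finset

/-- Determinant as a sum over permutations, "row" form. -/
lemma det_row_form {m : ℕ} (M : Matrix (Fin m) (Fin m) ℝ) :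
    M.det = ∑ σ : Equiv.Perm (Fin m), ((Equiv.Perm.sign σ : ℤ) : ℝ) * ∏ i, M i (σ i) := by
  conv_lhs => rw [← Matrix.det_transpose, Matrix.det_apply']
  simp only [Matrix.transpose_apply]

/-- Expansion of `det (A * B)` over functions (pre-Cauchy–Binet). -/
lemma det_mul_expand {m N : ℕ} (A : Matrix (Fin m) (Fin N) ℝ) (B : Matrix (Fin N) (Fin m) ℝ) :
    (A * B).det = ∑ f : Fin m → Fin N, (∏ i, A i (f i)) * (B.submatrix f id).det := by
  rw [det_row_form]
  have h1 : ∀ σ : Equiv.Perm (Fin m), ∏ i, (A * B) i (σ i)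
      = ∑ f : Fin m → Fin N, ∏ i, A i (f i) * B (f i) (σ i) := by
    intro σ
    simp only [Matrix.mul_apply]
    rw [Finset.prod_univ_sum, Fintype.piFinset_univ]
  simp only [h1, Finset.mul_sum]
  rw [Finset.sum_comm]
  refine Finset.sum_congr rfl fun f _ => ?_
  rw [det_row_form, Finset.mul_sum]
  refine Finset.sum_congr rfl fun σ _ => ?_
  simp only [Matrix.submatrix_apply, id_eq, Finset.prod_mul_distrib]
  ring

lemma d_eq_zero {m N : ℕ} (B : Matrix (Fin N) (Fin m) ℝ) {h : Fin m → Fin N}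
    (hh : ¬ Function.Injective h) : (B.submatrix h id).det = 0 := by
  rw [Function.not_injective_iff] at hh
  obtain ⟨i, j, hij, hne⟩ := hh
  exact Matrix.det_zero_of_row_eq hne (by funext k; simp [hij])

lemma D_eq_zero {m N : ℕ} (A : Matrix (Fin m) (Fin N) ℝ) {f : Fin m → Fin N}
    (hf : ¬ Function.Injective f) : (A.submatrix id f).det = 0 := by
  rw [Function.not_injective_iff] at hf
  obtain ⟨i, j, hij, hne⟩ := hf
  exact Matrix.det_zero_of_column_eq hne (by intro k; simp [hij])

lemma sum_eps {N : ℕ} (U : Finset (Fin N)) :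
    ∑ ε : Fin N → ℤˣ, ∏ k ∈ U, ((ε k : ℤ) : ℝ) = if U = ∅ then (2 : ℝ) ^ N else 0 := by
  have huniv : (Finset.univ : Finset ℤˣ) = {1, -1} := by decide
  have h1 : ∀ ε : Fin N → ℤˣ, ∏ k ∈ U, ((ε k : ℤ) : ℝ)
      = ∏ k : Fin N, (if k ∈ U then ((ε k : ℤ) : ℝ) else 1) := by
    intro ε
    rw [Finset.prod_ite_mem, Finset.univ_inter]
  simp only [h1]
  rw [← Fintype.prod_sum (fun (k : Fin N) (u : ℤˣ) => if k ∈ U then ((u : ℤ) : ℝ) else 1)]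
  have h2 : ∀ k : Fin N, (∑ u : ℤˣ, (if k ∈ U then ((u : ℤ) : ℝ) else 1))
      = if k ∈ U then 0 else 2 := by
    intro k
    by_cases hk : k ∈ U <;> simp [hk, huniv]
  rw [Finset.prod_congr rfl (fun k _ => h2 k)]
  by_cases hU : U = ∅
  · simp [hU, Finset.card_univ]
  · obtain ⟨k, hk⟩ := Finset.nonempty_iff_ne_empty.mpr hU
    rw [if_neg hU]
    exact Finset.prod_eq_zero (Finset.mem_univ k) (by simp [hk])

lemma prod_image_mul {N : ℕ} (S T : Finset (Fin N)) (x : Fin N → ℝ) (hx : ∀ k, x k * x k = 1) :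
    (∏ k ∈ S, x k) * ∏ k ∈ T, x k = ∏ k ∈ (symmDiff S T), x k := by
  rw [← Finset.prod_union_inter]
  have hd : Disjoint (symmDiff S T) (S ∩ T) := by simpa using disjoint_symmDiff_inf S T
  have hu : symmDiff S T ∪ (S ∩ T) = S ∪ T := by simpa using symmDiff_sup_inf S T
  rw [← hu, Finset.prod_union hd, mul_assoc, ← Finset.prod_mul_distrib]
  simp [hx]

/-- The key ε-average. -/
lemma sum_eps_pair {m N : ℕ} {f g : Fin m → Fin N} (hf : Function.Injective f)
    (hg : Function.Injective g) :
    ∑ ε : Fin N → ℤˣ, (∏ i, ((ε (f i) : ℤ) : ℝ)) * ∏ i, ((ε (g i) : ℤ) : ℝ)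
      = if Finset.image f Finset.univ = Finset.image g Finset.univ then (2 : ℝ) ^ N else 0 := by
  have h1 : ∀ ε : Fin N → ℤˣ,
      (∏ i, ((ε (f i) : ℤ) : ℝ)) * ∏ i, ((ε (g i) : ℤ) : ℝ)
        = ∏ k ∈ symmDiff (Finset.image f Finset.univ) (Finset.image g Finset.univ),
            ((ε k : ℤ) : ℝ) := by
    intro ε
    have e1 : ∏ k ∈ Finset.image f Finset.univ, ((ε k : ℤ) : ℝ) = ∏ i, ((ε (f i) : ℤ) : ℝ) :=
      Finset.prod_image (fun a _ b _ h => hf h)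
    have e2 : ∏ k ∈ Finset.image g Finset.univ, ((ε k : ℤ) : ℝ) = ∏ i, ((ε (g i) : ℤ) : ℝ) :=
      Finset.prod_image (fun a _ b _ h => hg h)
    rw [← e1, ← e2]
    refine prod_image_mul _ _ _ ?_
    intro k
    rcases Int.units_eq_one_or (ε k) with h | h <;> simp [h]
  simp only [h1]
  rw [sum_eps]
  congr 1
  simp [symmDiff_eq_bot]

lemma exists_tau {m N : ℕ} {f g : Fin m → Fin N} (hg : Function.Injective g)
    (h : Finset.image f Finset.univ = Finset.image g Finset.univ) :
    ∃ τ : Equiv.Perm (Fin m), g = f ∘ τ := by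
  have hmem : ∀ i, ∃ j, f j = g i := by
    intro i
    have : g i ∈ Finset.image f Finset.univ := by
      rw [h]; exact Finset.mem_image_of_mem g (Finset.mem_univ i)
    simpa using this
  choose τ0 hτ0 using hmem
  have hinj : Function.Injective τ0 := by
    intro i j hij
    apply hg
    rw [← hτ0 i, ← hτ0 j, hij]
  refine ⟨Equiv.ofBijective τ0 (Finite.injective_iff_bijective.mp hinj), ?_⟩
  funext i
  simp [hτ0 i]

lemma exists_perm_comp {m N : ℕ} {f g : Fin m → Fin N} (hf : Function.Injective f)
    (hg : Function.Injective g) : ∃ π₀ : Equiv.Perm (Fin N), ⇑π₀ ∘ f = g := by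
  classical
  let e : {x // x ∈ Set.range f} ≃ {x // x ∈ Set.range g} :=
    (Equiv.ofInjective f hf).symm.trans (Equiv.ofInjective g hg)
  refine ⟨e.extendSubtype, ?_⟩
  funext i
  have hx : f i ∈ Set.range f := ⟨i, rfl⟩
  have h0 := e.extendSubtype_apply_of_mem (f i) hx
  rw [Function.comp_apply, h0]
  show ((((Equiv.ofInjective f hf).symm.trans (Equiv.ofInjective g hg)) ⟨f i, hx⟩ :
    {x // x ∈ Set.range g}) : Fin N) = g i
  rw [Equiv.trans_apply]
  have h1 : (⟨f i, hx⟩ : {x // x ∈ Set.range f}) = Equiv.ofInjective f hf i := by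
    ext; simp [Equiv.ofInjective_apply]
  rw [h1, Equiv.symm_apply_apply]
  first
  | rfl
  | rw [Equiv.ofInjective_apply]

lemma d_comp_perm {m N : ℕ} (B : Matrix (Fin N) (Fin m) ℝ) (h : Fin m → Fin N)
    (τ : Equiv.Perm (Fin m)) :
    (B.submatrix (h ∘ τ) id).det
      = ((Equiv.Perm.sign τ : ℤ) : ℝ) * (B.submatrix h id).det := by
  have : B.submatrix (h ∘ τ) id = (B.submatrix h id).submatrix τ id := rfl
  rw [this, Matrix.det_permute]

def cf {m N : ℕ} (A : Matrix (Fin m) (Fin N) ℝ) (f : Fin m → Fin N) : ℝ := ∏ i, A i (f i)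

def dd {m N : ℕ} (B : Matrix (Fin N) (Fin m) ℝ) (h : Fin m → Fin N) : ℝ :=
  (B.submatrix h id).det

def DD {m N : ℕ} (A : Matrix (Fin m) (Fin N) ℝ) (f : Fin m → Fin N) : ℝ :=
  (A.submatrix id f).det

def inj (m N : ℕ) : Finset (Fin m → Fin N) := Finset.univ.filter Function.Injective

lemma mem_inj {m N : ℕ} {f : Fin m → Fin N} : f ∈ inj m N ↔ Function.Injective f := by
  simp [inj]

/-- `∑_f c_f D_f = det (A Aᵀ)`. -/
lemma sum_cD {m N : ℕ} (A : Matrix (Fin m) (Fin N) ℝ) :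
    ∑ f : Fin m → Fin N, cf A f * DD A f = (A * Aᵀ).det := by
  rw [det_mul_expand]
  refine Finset.sum_congr rfl fun f _ => ?_
  have : Aᵀ.submatrix f id = (A.submatrix id f)ᵀ := rfl
  rw [this, Matrix.det_transpose]
  rfl

/-- `∑_h p_h d_h = det (Bᵀ B)`. -/
lemma sum_pd {m N : ℕ} (B : Matrix (Fin N) (Fin m) ℝ) :
    ∑ h : Fin m → Fin N, (∏ i, B (h i) i) * dd B h = (Bᵀ * B).det := by
  rw [det_mul_expand]
  rfl

/-- `∑_h d_h² = m!` (sum over all functions; non-injective terms vanish). -/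
lemma sum_d_sq {m N : ℕ} (B : Matrix (Fin N) (Fin m) ℝ) (hB : Bᵀ * B = 1) :
    ∑ h : Fin m → Fin N, (dd B h) ^ 2 = (m.factorial : ℝ) := by
  have expand : ∀ h : Fin m → Fin N, dd B h
      = ∑ σ : Equiv.Perm (Fin m), ((Equiv.Perm.sign σ : ℤ) : ℝ) * ∏ i, B (h (σ i)) i := by
    intro h
    rw [dd, Matrix.det_apply']
    refine Finset.sum_congr rfl fun σ _ => ?_
    simp [Units.smul_def]
  have hpd : ∑ h : Fin m → Fin N, (∏ i, B (h i) i) * dd B h = 1 := by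
    rw [sum_pd, hB, Matrix.det_one]
  have key : ∀ σ : Equiv.Perm (Fin m),
      ∑ h : Fin m → Fin N, (∏ i, B (h (σ i)) i) * dd B h
        = ((Equiv.Perm.sign σ : ℤ) : ℝ) := by
    intro σ
    have hbij : Function.Bijective (fun h : Fin m → Fin N => h ∘ ⇑σ⁻¹) := by
      constructor
      · intro a b hab
        funext i
        have h2 := congrFun hab (σ i)
        simpa using h2
      · intro b
        exact ⟨b ∘ ⇑σ, by funext i; simp⟩
    have hsum := Fintype.sum_bijective (fun h : Fin m → Fin N => h ∘ ⇑σ⁻¹) hbij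
      (fun h => (∏ i, B (h i) i) * (((Equiv.Perm.sign σ : ℤ) : ℝ) * dd B h))
      (fun h => (∏ i, B (h (σ i)) i) * dd B h) ?_
    · rw [← hsum]
      have : ∑ h : Fin m → Fin N, (∏ i, B (h i) i)
            * (((Equiv.Perm.sign σ : ℤ) : ℝ) * dd B h)
          = ((Equiv.Perm.sign σ : ℤ) : ℝ)
            * ∑ h : Fin m → Fin N, (∏ i, B (h i) i) * dd B h := by
        rw [Finset.mul_sum]
        exact Finset.sum_congr rfl fun h _ => by ring
      rw [this, hpd, mul_one]
    · intro h
      have hd1 : dd B (h ∘ ⇑σ⁻¹) = ((Equiv.Perm.sign σ : ℤ) : ℝ) * dd B h := by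
        simp only [dd]
        rw [d_comp_perm, Equiv.Perm.sign_inv]
      have hp1 : ∏ i, B ((h ∘ ⇑σ⁻¹) (σ i)) i = ∏ i, B (h i) i := by
        refine Finset.prod_congr rfl fun i _ => ?_
        simp
      show (∏ i, B (h i) i) * (((Equiv.Perm.sign σ : ℤ) : ℝ) * dd B h)
          = (∏ i, B ((h ∘ ⇑σ⁻¹) (σ i)) i) * dd B (h ∘ ⇑σ⁻¹)
      rw [hp1, hd1]
  calc ∑ h : Fin m → Fin N, (dd B h) ^ 2
      = ∑ h : Fin m → Fin N, ∑ σ : Equiv.Perm (Fin m),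
          ((Equiv.Perm.sign σ : ℤ) : ℝ) * ((∏ i, B (h (σ i)) i) * dd B h) := by
        refine Finset.sum_congr rfl fun h _ => ?_
        rw [pow_two]
        nth_rewrite 1 [expand h]
        rw [Finset.sum_mul]
        exact Finset.sum_congr rfl fun σ _ => by ring
    _ = ∑ σ : Equiv.Perm (Fin m), ((Equiv.Perm.sign σ : ℤ) : ℝ)
          * ∑ h : Fin m → Fin N, (∏ i, B (h (σ i)) i) * dd B h := by
        rw [Finset.sum_comm]
        exact Finset.sum_congr rfl fun σ _ => by rw [Finset.mul_sum]
    _ = ∑ σ : Equiv.Perm (Fin m), (1 : ℝ) := by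
        refine Finset.sum_congr rfl fun σ _ => ?_
        rw [key σ]
        rcases Int.units_eq_one_or (Equiv.Perm.sign σ) with h | h <;> simp [h]
    _ = (m.factorial : ℝ) := by
        simp [Finset.card_univ, Fintype.card_perm]

/-- Step 1: expansion of `det (A · sB)` over injective functions. -/
lemma det_signed_expand {m N : ℕ} (A : Matrix (Fin m) (Fin N) ℝ) (B : Matrix (Fin N) (Fin m) ℝ)
    (π : Equiv.Perm (Fin N)) (ε : Fin N → ℤˣ) :
    (A * signedPermCols π ε B).det
      = ∑ f ∈ inj m N, cf A f * ((∏ i, ((ε (f i) : ℤ) : ℝ)) * dd B (⇑π ∘ f)) := by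
  have h2 : ∀ f : Fin m → Fin N, ((signedPermCols π ε B).submatrix f id).det
      = (∏ i, ((ε (f i) : ℤ) : ℝ)) * dd B (⇑π ∘ f) := by
    intro f
    have hrw : (signedPermCols π ε B).submatrix f id
        = Matrix.of fun i j => ((ε (f i) : ℤ) : ℝ) * (B.submatrix (⇑π ∘ f) id) i j := rfl
    rw [hrw, Matrix.det_mul_column]
    rfl
  calc (A * signedPermCols π ε B).det
      = ∑ f : Fin m → Fin N, cf A f * ((∏ i, ((ε (f i) : ℤ) : ℝ)) * dd B (⇑π ∘ f)) := by
        rw [det_mul_expand]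
        exact Finset.sum_congr rfl fun f _ => by rw [h2 f]; rfl
    _ = ∑ f ∈ inj m N, cf A f * ((∏ i, ((ε (f i) : ℤ) : ℝ)) * dd B (⇑π ∘ f)) := by
        refine (Finset.sum_subset (Finset.subset_univ _) ?_).symm
        intro f _ hf
        have hninj : ¬ Function.Injective f := fun h => hf (mem_inj.mpr h)
        have hninj2 : ¬ Function.Injective (⇑π ∘ f) := by
          intro h
          exact hninj fun a b hab => h (by simp [Function.comp, hab])
        have : dd B (⇑π ∘ f) = 0 := d_eq_zero B hninj2
        rw [this]
        ring

/-- Step 4: summing over injections with a fixed image. -/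
lemma sum_over_same_image {m N : ℕ} (A : Matrix (Fin m) (Fin N) ℝ)
    (B : Matrix (Fin N) (Fin m) ℝ) (π : Equiv.Perm (Fin N)) {f : Fin m → Fin N}
    (hf : Function.Injective f) :
    ∑ g ∈ (inj m N).filter
        (fun g => Finset.image f Finset.univ = Finset.image g Finset.univ),
        cf A g * dd B (⇑π ∘ g)
      = DD A f * dd B (⇑π ∘ f) := by
  classical
  have hbij : ∑ τ : Equiv.Perm (Fin m), cf A (f ∘ ⇑τ) * dd B (⇑π ∘ (f ∘ ⇑τ))
      = ∑ g ∈ (inj m N).filter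
          (fun g => Finset.image f Finset.univ = Finset.image g Finset.univ),
          cf A g * dd B (⇑π ∘ g) := by
    refine Finset.sum_bij (fun (τ : Equiv.Perm (Fin m)) _ => f ∘ ⇑τ) ?_ ?_ ?_ ?_
    · intro τ _
      rw [Finset.mem_filter]
      refine ⟨mem_inj.mpr (hf.comp τ.injective), ?_⟩
      show Finset.image f Finset.univ = Finset.image (f ∘ ⇑τ) Finset.univ
      rw [← Finset.image_image, Finset.image_univ_equiv]
    · intro τ _ τ' _ hee
      have hee' : f ∘ ⇑τ = f ∘ ⇑τ' := hee
      exact Equiv.ext fun i => hf (congrFun hee' i)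
    · intro g hg
      rw [Finset.mem_filter] at hg
      obtain ⟨τ, hτ⟩ := exists_tau (mem_inj.mp hg.1) hg.2
      exact ⟨τ, Finset.mem_univ τ, hτ.symm⟩
    · intro τ _
      rfl
  rw [← hbij]
  have hterm : ∀ τ : Equiv.Perm (Fin m), cf A (f ∘ ⇑τ) * dd B (⇑π ∘ (f ∘ ⇑τ))
      = (((Equiv.Perm.sign τ : ℤ) : ℝ) * cf A (f ∘ ⇑τ)) * dd B (⇑π ∘ f) := by
    intro τ
    have : dd B (⇑π ∘ (f ∘ ⇑τ)) = ((Equiv.Perm.sign τ : ℤ) : ℝ) * dd B (⇑π ∘ f) := by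
      simp only [dd]
      exact d_comp_perm B (⇑π ∘ f) τ
    rw [this]
    ring
  rw [Finset.sum_congr rfl fun τ _ => hterm τ, ← Finset.sum_mul]
  congr 1
  rw [DD, det_row_form]
  rfl

/-- Step 2–3: the ε-average of the square of the determinant. -/
lemma sum_eps_det_sq {m N : ℕ} (A : Matrix (Fin m) (Fin N) ℝ) (B : Matrix (Fin N) (Fin m) ℝ)
    (π : Equiv.Perm (Fin N)) :
    ∑ ε : Fin N → ℤˣ, (A * signedPermCols π ε B).det ^ 2
      = 2 ^ N * ∑ f ∈ inj m N, cf A f * DD A f * (dd B (⇑π ∘ f)) ^ 2 := by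
  classical
  have h1 : ∀ ε : Fin N → ℤˣ, (A * signedPermCols π ε B).det ^ 2
      = ∑ f ∈ inj m N, ∑ g ∈ inj m N,
          ((∏ i, ((ε (f i) : ℤ) : ℝ)) * ∏ i, ((ε (g i) : ℤ) : ℝ))
            * ((cf A f * dd B (⇑π ∘ f)) * (cf A g * dd B (⇑π ∘ g))) := by
    intro ε
    rw [pow_two, det_signed_expand, Finset.sum_mul_sum]
    exact Finset.sum_congr rfl fun f _ => Finset.sum_congr rfl fun g _ => by ring
  calc ∑ ε : Fin N → ℤˣ, (A * signedPermCols π ε B).det ^ 2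
      = ∑ f ∈ inj m N, ∑ g ∈ inj m N,
          (∑ ε : Fin N → ℤˣ,
            (∏ i, ((ε (f i) : ℤ) : ℝ)) * ∏ i, ((ε (g i) : ℤ) : ℝ))
            * ((cf A f * dd B (⇑π ∘ f)) * (cf A g * dd B (⇑π ∘ g))) := by
        simp only [h1]
        rw [Finset.sum_comm]
        refine Finset.sum_congr rfl fun f _ => ?_
        rw [Finset.sum_comm]
        refine Finset.sum_congr rfl fun g _ => ?_
        rw [Finset.sum_mul]
    _ = ∑ f ∈ inj m N, ∑ g ∈ inj m N,
          (if Finset.image f Finset.univ = Finset.image g Finset.univ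
            then ((2 : ℝ) ^ N * ((cf A f * dd B (⇑π ∘ f)) * (cf A g * dd B (⇑π ∘ g)))) else 0) := by
        refine Finset.sum_congr rfl fun f hfm => Finset.sum_congr rfl fun g hgm => ?_
        rw [sum_eps_pair (mem_inj.mp hfm) (mem_inj.mp hgm)]
        by_cases hfg : Finset.image f Finset.univ = Finset.image g Finset.univ <;>
          simp [hfg]
    _ = ∑ f ∈ inj m N, (2 : ℝ) ^ N * ((cf A f * dd B (⇑π ∘ f)) * (DD A f * dd B (⇑π ∘ f))) := by
        refine Finset.sum_congr rfl fun f hfm => ?_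
        rw [← Finset.sum_filter, ← Finset.mul_sum]
        have : ∑ g ∈ (inj m N).filter
            (fun g => Finset.image f Finset.univ = Finset.image g Finset.univ),
            (cf A f * dd B (⇑π ∘ f)) * (cf A g * dd B (⇑π ∘ g))
          = (cf A f * dd B (⇑π ∘ f)) * ∑ g ∈ (inj m N).filter
            (fun g => Finset.image f Finset.univ = Finset.image g Finset.univ),
            cf A g * dd B (⇑π ∘ g) := by
          rw [Finset.mul_sum]
        rw [this, sum_over_same_image A B π (mem_inj.mp hfm)]
    _ = 2 ^ N * ∑ f ∈ inj m N, cf A f * DD A f * (dd B (⇑π ∘ f)) ^ 2 := by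
        rw [Finset.mul_sum]
        exact Finset.sum_congr rfl fun f _ => by ring

/-- Step 6: `∑_π d(π∘f)²` does not depend on the injection `f`. -/
lemma K_const {m N : ℕ} (B : Matrix (Fin N) (Fin m) ℝ) {f g : Fin m → Fin N}
    (hf : Function.Injective f) (hg : Function.Injective g) :
    ∑ π : Equiv.Perm (Fin N), dd B (⇑π ∘ g) ^ 2
      = ∑ π : Equiv.Perm (Fin N), dd B (⇑π ∘ f) ^ 2 := by
  obtain ⟨π₀, hπ₀⟩ := exists_perm_comp hf hg
  have := Fintype.sum_bijective (fun π : Equiv.Perm (Fin N) => π * π₀)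
    (Group.mulRight_bijective π₀)
    (fun π : Equiv.Perm (Fin N) => dd B (⇑π ∘ g) ^ 2)
    (fun π : Equiv.Perm (Fin N) => dd B (⇑π ∘ f) ^ 2) ?_
  · exact this
  · intro π
    have h1 : ⇑(π * π₀) ∘ f = ⇑π ∘ g := by
      rw [← hπ₀]
      rfl
    show dd B (⇑π ∘ g) ^ 2 = dd B (⇑(π * π₀) ∘ f) ^ 2
    rw [h1]

/-- Step 8: summing `∑_π d(π∘f)²` over all injections `f`. -/
lemma sum_inj_K {m N : ℕ} (B : Matrix (Fin N) (Fin m) ℝ) (hB : Bᵀ * B = 1) :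
    ∑ f ∈ inj m N, ∑ π : Equiv.Perm (Fin N), dd B (⇑π ∘ f) ^ 2
      = (N.factorial : ℝ) * m.factorial := by
  rw [Finset.sum_comm]
  have hinner : ∀ π : Equiv.Perm (Fin N),
      ∑ f ∈ inj m N, dd B (⇑π ∘ f) ^ 2 = (m.factorial : ℝ) := by
    intro π
    have hbij : ∑ f ∈ inj m N, dd B (⇑π ∘ f) ^ 2 = ∑ h ∈ inj m N, dd B h ^ 2 := by
      refine Finset.sum_nbij' (fun f => ⇑π ∘ f) (fun h => ⇑π.symm ∘ h) ?_ ?_ ?_ ?_ ?_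
      · intro f hfm
        exact mem_inj.mpr ((Equiv.injective π).comp (mem_inj.mp hfm))
      · intro h hhm
        exact mem_inj.mpr ((Equiv.injective π.symm).comp (mem_inj.mp hhm))
      · intro f _
        funext i
        simp
      · intro h _
        funext i
        simp
      · intro f _
        rfl
    rw [hbij]
    have hext : ∑ h ∈ inj m N, dd B h ^ 2 = ∑ h : Fin m → Fin N, dd B h ^ 2 := by
      refine Finset.sum_subset (Finset.subset_univ _) ?_
      intro h _ hhm
      have : dd B h = 0 := d_eq_zero B (fun hcon => hhm (mem_inj.mpr hcon))
      rw [this]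
      ring
    rw [hext, sum_d_sq B hB]
  rw [Finset.sum_congr rfl fun π _ => hinner π, Finset.sum_const, Finset.card_univ,
    Fintype.card_perm, Fintype.card_fin, nsmul_eq_mul]

/-- The number of injections `Fin m → Fin N`. -/
lemma card_inj (m N : ℕ) : ((inj m N).card : ℝ) = (m.factorial : ℝ) * N.choose m := by
  classical
  have h1 : (inj m N).card = Fintype.card {f : Fin m → Fin N // Function.Injective f} := by
    rw [Fintype.card_subtype]
    rfl
  have h2 : Fintype.card {f : Fin m → Fin N // Function.Injective f}
      = Fintype.card (Fin m ↪ Fin N) :=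
    Fintype.card_congr (Equiv.subtypeInjectiveEquivEmbedding (Fin m) (Fin N))
  rw [h1, h2, Fintype.card_embedding_eq, Fintype.card_fin, Fintype.card_fin,
    Nat.descFactorial_eq_factorial_mul_choose]
  push_cast
  ring

/-- The main identity: `C(N,m) · ∑_{π,ε} det(A·sB)² = 2^N · N!`. -/
lemma main_identity {m N : ℕ} (A : Matrix (Fin m) (Fin N) ℝ) (hA : A * Aᵀ = 1)
    (B : Matrix (Fin N) (Fin m) ℝ) (hB : Bᵀ * B = 1) (hmn : m ≤ N) :
    (N.choose m : ℝ) * ∑ π : Equiv.Perm (Fin N), ∑ ε : Fin N → ℤˣ,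
        (A * signedPermCols π ε B).det ^ 2
      = 2 ^ N * N.factorial := by
  classical
  set f₀ : Fin m → Fin N := Fin.castLE hmn with hf₀def
  have hf₀ : Function.Injective f₀ := Fin.castLE_injective hmn
  set K : ℝ := ∑ π : Equiv.Perm (Fin N), dd B (⇑π ∘ f₀) ^ 2 with hK
  -- T = 2^N * K
  have hsum1 : ∑ f ∈ inj m N, cf A f * DD A f = 1 := by
    have hext : ∑ f ∈ inj m N, cf A f * DD A f = ∑ f : Fin m → Fin N, cf A f * DD A f := by
      refine Finset.sum_subset (Finset.subset_univ _) ?_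
      intro f _ hfm
      have : DD A f = 0 := D_eq_zero A (fun hcon => hfm (mem_inj.mpr hcon))
      rw [this]
      ring
    rw [hext, sum_cD, hA, Matrix.det_one]
  have hT : ∑ π : Equiv.Perm (Fin N), ∑ ε : Fin N → ℤˣ,
      (A * signedPermCols π ε B).det ^ 2 = 2 ^ N * K := by
    calc ∑ π : Equiv.Perm (Fin N), ∑ ε : Fin N → ℤˣ, (A * signedPermCols π ε B).det ^ 2
        = ∑ π : Equiv.Perm (Fin N), 2 ^ N * ∑ f ∈ inj m N,
            cf A f * DD A f * (dd B (⇑π ∘ f)) ^ 2 :=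
          Finset.sum_congr rfl fun π _ => sum_eps_det_sq A B π
      _ = 2 ^ N * ∑ f ∈ inj m N, cf A f * DD A f
            * ∑ π : Equiv.Perm (Fin N), (dd B (⇑π ∘ f)) ^ 2 := by
          rw [← Finset.mul_sum, Finset.sum_comm]
          congr 1
          refine Finset.sum_congr rfl fun f _ => ?_
          rw [Finset.mul_sum]
      _ = 2 ^ N * ∑ f ∈ inj m N, cf A f * DD A f * K := by
          congr 1
          refine Finset.sum_congr rfl fun f hfm => ?_
          rw [K_const B hf₀ (mem_inj.mp hfm)]
      _ = 2 ^ N * K := by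
          rw [← Finset.sum_mul, hsum1, one_mul]
  -- K * card(inj) = N! * m!
  have hKcard : K * ((inj m N).card : ℝ) = (N.factorial : ℝ) * m.factorial := by
    have h1 : ∑ f ∈ inj m N, ∑ π : Equiv.Perm (Fin N), dd B (⇑π ∘ f) ^ 2
        = ∑ f ∈ inj m N, K := by
      refine Finset.sum_congr rfl fun f hfm => ?_
      rw [K_const B hf₀ (mem_inj.mp hfm)]
    rw [← sum_inj_K B hB, h1, Finset.sum_const, nsmul_eq_mul, mul_comm]
  have hCK : (N.choose m : ℝ) * K = N.factorial := by
    have hm0 : (m.factorial : ℝ) ≠ 0 := by positivity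
    apply mul_right_cancel₀ hm0
    rw [card_inj] at hKcard
    calc (N.choose m : ℝ) * K * m.factorial = K * ((m.factorial : ℝ) * N.choose m) := by ring
      _ = (N.factorial : ℝ) * m.factorial := hKcard
  rw [hT]
  calc (N.choose m : ℝ) * (2 ^ N * K) = 2 ^ N * ((N.choose m : ℝ) * K) := by ring
    _ = 2 ^ N * N.factorial := by rw [hCK]

end Lemma33Aux

open Matrix Finset Lemma33Aux in
/-- **Lemma 3.3.** -/
theorem average_abs_det_signed_perm_le (N m : ℕ)
    (A : Matrix (Fin m) (Fin N) ℝ) (hA : A * Aᵀ = 1)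
    (B : Matrix (Fin N) (Fin m) ℝ) (hB : Bᵀ * B = 1) :
    (∑ π : Equiv.Perm (Fin N), ∑ ε : Fin N → ℤˣ,
        |(A * signedPermCols π ε B).det|) / (2 ^ N * N.factorial) ≤
      1 / Real.sqrt (N.choose m) := by
  classical
  -- m ≤ N
  have hmn : m ≤ N := by
    by_contra hcon
    push_neg at hcon
    have h1 : (A * Aᵀ).rank ≤ N :=
      le_trans (Matrix.rank_mul_le_left A Aᵀ)
        (le_trans (Matrix.rank_le_card_width A) (by simp))
    rw [hA, Matrix.rank_one] at h1
    simp at h1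
    omega
  have hC : (0 : ℝ) < N.choose m := by
    exact_mod_cast Nat.choose_pos hmn
  have hsqrtC : (0 : ℝ) < Real.sqrt (N.choose m) := Real.sqrt_pos.mpr hC
  set S : ℝ := ∑ π : Equiv.Perm (Fin N), ∑ ε : Fin N → ℤˣ,
      |(A * signedPermCols π ε B).det| with hSdef
  set T : ℝ := ∑ π : Equiv.Perm (Fin N), ∑ ε : Fin N → ℤˣ,
      (A * signedPermCols π ε B).det ^ 2 with hTdef
  set Q : ℝ := 2 ^ N * N.factorial with hQdef
  have hQ0 : (0 : ℝ) < Q := by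
    rw [hQdef]
    positivity
  have hS0 : 0 ≤ S := by
    rw [hSdef]
    refine Finset.sum_nonneg fun π _ => Finset.sum_nonneg fun ε _ => abs_nonneg _
  -- Cauchy–Schwarz
  have hCS : S ^ 2 ≤ Q * T := by
    have key := sq_sum_le_card_mul_sum_sq
      (s := (Finset.univ : Finset (Equiv.Perm (Fin N) × (Fin N → ℤˣ))))
      (f := fun p => |(A * signedPermCols p.1 p.2 B).det|)
    have hcard : ((Finset.univ : Finset (Equiv.Perm (Fin N) × (Fin N → ℤˣ))).card : ℝ) = Q := by
      rw [Finset.card_univ, Fintype.card_prod, Fintype.card_perm, Fintype.card_fin,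
        Fintype.card_fun]
      have h2 : Fintype.card ℤˣ = 2 := rfl
      rw [h2, Fintype.card_fin, hQdef]
      push_cast
      ring
    have hsum1 : ∑ p : Equiv.Perm (Fin N) × (Fin N → ℤˣ),
        |(A * signedPermCols p.1 p.2 B).det| = S := by
      rw [hSdef, Fintype.sum_prod_type]
    have hsum2 : ∑ p : Equiv.Perm (Fin N) × (Fin N → ℤˣ),
        |(A * signedPermCols p.1 p.2 B).det| ^ 2 = T := by
      rw [hTdef, Fintype.sum_prod_type]
      exact Finset.sum_congr rfl fun π _ => Finset.sum_congr rfl fun ε _ => sq_abs _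
    rw [hsum1, hsum2, hcard] at key
    exact key
  have hmain := main_identity A hA B hB hmn
  rw [← hTdef, ← hQdef] at hmain
  -- conclude via squares
  have hTQ : T = Q / (N.choose m : ℝ) := by
    field_simp
    linarith [hmain]
  have hsq : (S / Q) ^ 2 ≤ (1 / Real.sqrt (N.choose m)) ^ 2 := by
    have h1 : (S / Q) ^ 2 = S ^ 2 / Q ^ 2 := by ring
    have h2 : (1 / Real.sqrt (N.choose m)) ^ 2 = 1 / (N.choose m : ℝ) := by
      rw [div_pow, one_pow, Real.sq_sqrt hC.le]
    rw [h1, h2]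
    rw [div_le_div_iff₀ (by positivity) hC]
    calc S ^ 2 * (N.choose m : ℝ) ≤ (Q * T) * (N.choose m : ℝ) := by
          have := hCS
          nlinarith [hC]
      _ = Q * ((N.choose m : ℝ) * T) := by ring
      _ = Q * Q := by rw [hmain]
      _ = 1 * Q ^ 2 := by ring
  have hdiv0 : 0 ≤ S / Q := div_nonneg hS0 hQ0.le
  have hrhs0 : 0 ≤ 1 / Real.sqrt (N.choose m) := by positivity
  calc S / Q = Real.sqrt ((S / Q) ^ 2) := (Real.sqrt_sq hdiv0).symm
    _ ≤ Real.sqrt ((1 / Real.sqrt (N.choose m)) ^ 2) := Real.sqrt_le_sqrt hsq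
    _ = 1 / Real.sqrt (N.choose m) := Real.sqrt_sq hrhs0

end
end

section
/- Let A be an m×N real matrix with orthonormal rows and B an N×m real matrix with orthonormal columns. For a signed permutation s = (π,ε) of ℝ^N let sB denote the matrix obtained by applying s to each column of B. Then the average over all 2^N · N! signed permutations s of det²(A · (sB)) equals 1/(N choose m). -/
open scoped BigOperators Matrix

noncomputable section

/-!
Expand `det (A * s B)` by Cauchy–Binet over injections `p : Fin m ↪ Fin N`. Averaging over the
signs `ε` kills every cross term between minors on different column sets, leaving
`Σ_p det(A_p)² det((πB)_p)²` up to the factor `m!`. The permutations `π` act transitively on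
injections, so averaging over `π` replaces `det((πB)_p)²` by its mean over all injections; by
Cauchy–Binet again `Σ_p det(A_p)² = m! det (A Aᵀ) = m!`, likewise for `B`, and the number of
injections `N! / (N - m)! = m! * N.choose m` produces the binomial coefficient.
-/

open Matrix Finset Function

theorem sum_units_prod_mul_prod {R κ : Type*} [CommRing R] [Fintype κ] [DecidableEq κ]
    (S T : Finset κ) :
    ∑ ε : κ → ℤˣ, (∏ k ∈ S, ((ε k : ℤ) : R)) * ∏ k ∈ T, ((ε k : ℤ) : R) =
      if S = T then 2 ^ Fintype.card κ else 0 := by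
  have split (ε : κ → ℤˣ) : (∏ k ∈ S, ((ε k : ℤ) : R)) * ∏ k ∈ T, ((ε k : ℤ) : R) =
      ∏ k, (if k ∈ S then ((ε k : ℤ) : R) else 1) * (if k ∈ T then ((ε k : ℤ) : R) else 1) := by
    rw [prod_mul_distrib, prod_ite_mem_eq, prod_ite_mem_eq]
  have factor (k : κ) : ∑ u : ℤˣ, (if k ∈ S then ((u : ℤ) : R) else 1) *
      (if k ∈ T then ((u : ℤ) : R) else 1) = if (k ∈ S ↔ k ∈ T) then 2 else 0 := by
    by_cases hS : k ∈ S <;> by_cases hT : k ∈ T <;>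
      simp [hS, hT, UnitsInt.univ, one_add_one_eq_two]
  rw [sum_congr rfl fun ε _ => split ε, ← Fintype.prod_sum (fun k (u : ℤˣ) =>
    (if k ∈ S then ((u : ℤ) : R) else 1) * (if k ∈ T then ((u : ℤ) : R) else 1))]
  simp only [factor, Fintype.prod_ite_zero, ← Finset.ext_iff, prod_const, card_univ]

theorem MulAction.card_nsmul_sum_smul_eq {G X M : Type*} [Group G] [Fintype G] [MulAction G X]
    [Fintype X] [IsPretransitive G X] [AddCommMonoid M] (f : X → M) (x : X) :
    Fintype.card X • ∑ g : G, f (g • x) = Fintype.card G • ∑ y, f y := by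
  have orbit_sum (y : X) : ∑ g : G, f (g • y) = ∑ g : G, f (g • x) := by
    obtain ⟨h, rfl⟩ := exists_smul_eq G x y
    simp_rw [smul_smul]
    exact Fintype.sum_equiv (Equiv.mulRight h) _ _ fun _ => rfl
  calc Fintype.card X • ∑ g : G, f (g • x) = ∑ y : X, ∑ g : G, f (g • y) := by
        simp [orbit_sum]
    _ = ∑ g : G, ∑ y : X, f (g • y) := sum_comm
    _ = ∑ _g : G, ∑ y, f y := sum_congr rfl fun g _ => Equiv.sum_comp (MulAction.toPerm g) f
    _ = _ := by rw [sum_const, card_univ]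

namespace Function.Embedding

variable {ι κ M : Type*} [Fintype ι] [DecidableEq ι] [Fintype κ] [DecidableEq κ]
  [AddCommMonoid M]

theorem sum_eq_sum_of_not_injective (f : (ι → κ) → M) (hf : ∀ p, ¬ Injective p → f p = 0) :
    ∑ p : ι ↪ κ, f p = ∑ p : ι → κ, f p := by
  rw [← Equiv.sum_comp (Equiv.subtypeInjectiveEquivEmbedding ι κ)]
  change ∑ p : {p : ι → κ // Injective p}, f p = _
  rw [← sum_subtype (univ.filter Injective) (by simp) f, sum_filter_of_ne]
  exact fun p _ hp => not_imp_comm.1 (hf p) hp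

theorem sum_ite_map_univ_eq (p : ι ↪ κ) (f : (ι ↪ κ) → M) :
    ∑ q : ι ↪ κ, (if univ.map q = univ.map p then f q else 0) =
      ∑ τ : Equiv.Perm ι, f (τ.toEmbedding.trans p) := by
  rw [← sum_filter, eq_comm]
  refine sum_bij (fun τ _ => τ.toEmbedding.trans p) (fun τ _ => ?_) (fun τ _ τ' _ h => ?_)
    (fun q hq => ?_) fun _ _ => rfl
  · simp [← Finset.map_map]
  · ext i
    exact p.injective (DFunLike.congr_fun h i)
  · have hrange : Set.range q = Set.range p := by
      simpa [← Set.image_univ] using congrArg ((↑) : Finset κ → Set κ) (mem_filter.1 hq).2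
    refine ⟨(Equiv.ofInjective q q.injective).trans
      ((Equiv.setCongr hrange).trans (Equiv.ofInjective p p.injective).symm), mem_univ _, ?_⟩
    ext i
    simp [Equiv.apply_ofInjective_symm]

end Function.Embedding

namespace Matrix

section

variable {R ι κ : Type*} [CommRing R] [Fintype ι] [DecidableEq ι]

theorem det_submatrix_id_eq_zero_of_not_injective (M : Matrix ι κ R) {p : ι → κ}
    (hp : ¬ Injective p) : (M.submatrix id p).det = 0 := by
  obtain ⟨i, j, hij, hne⟩ : ∃ i j, p i = p j ∧ i ≠ j := by simpa [Injective] using hp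
  exact det_zero_of_column_eq hne fun k => by simp [hij]

theorem det_submatrix_id_comp_perm (M : Matrix ι κ R) (p : ι → κ) (τ : Equiv.Perm ι) :
    (M.submatrix id (p ∘ τ)).det = (Equiv.Perm.sign τ : ℤ) * (M.submatrix id p).det := by
  rw [← det_permute', submatrix_submatrix]
  rfl

variable [Fintype κ]

theorem det_mul_eq_sum_det_submatrix_mul_prod (M : Matrix ι κ R) (C : Matrix κ ι R) :
    (M * C).det = ∑ p : ι → κ, (M.submatrix id p).det * ∏ i, C (p i) i := by
  simp only [det_apply', mul_apply, prod_univ_sum, Fintype.piFinset_univ, mul_sum, sum_mul]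
  rw [sum_comm]
  refine sum_congr rfl fun p _ => sum_congr rfl fun σ _ => ?_
  simp only [submatrix_apply, id, prod_mul_distrib]
  ring

variable [DecidableEq κ]

theorem det_mul_eq_sum_embedding_det_submatrix_mul_prod (M : Matrix ι κ R) (C : Matrix κ ι R) :
    (M * C).det = ∑ p : ι ↪ κ, (M.submatrix id p).det * ∏ i, C (p i) i := by
  rw [det_mul_eq_sum_det_submatrix_mul_prod]
  refine (Embedding.sum_eq_sum_of_not_injective _ fun p hp => ?_).symm
  rw [det_submatrix_id_eq_zero_of_not_injective M hp, zero_mul]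

theorem sum_embedding_det_submatrix_mul_det_submatrix (M : Matrix ι κ R) (C : Matrix κ ι R) :
    ∑ p : ι ↪ κ, (M.submatrix id p).det * (C.submatrix p id).det =
      (Fintype.card ι).factorial * (M * C).det := by
  have reindex (τ : Equiv.Perm ι) :
      ∑ p : ι ↪ κ, (M.submatrix id p).det * ((Equiv.Perm.sign τ : ℤ) : R) * ∏ i, C (p (τ i)) i =
        (M * C).det := by
    rw [det_mul_eq_sum_embedding_det_submatrix_mul_prod, eq_comm,
      ← Equiv.sum_comp (Equiv.embeddingCongr τ.symm (Equiv.refl κ))]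
    refine sum_congr rfl fun p _ => ?_
    change (M.submatrix id (p ∘ τ)).det * ∏ i, C (p (τ i)) i = _
    rw [det_submatrix_id_comp_perm]
    ring
  simp only [det_apply' (C.submatrix _ id), submatrix_apply, id, mul_sum]
  rw [sum_comm]
  simp_rw [← mul_assoc, reindex, sum_const, card_univ, Fintype.card_perm, nsmul_eq_mul]

theorem sum_units_prod_mul_det_mul_diagonal_mul (M : Matrix ι κ R) (C : Matrix κ ι R)
    (p : ι ↪ κ) :
    ∑ ε : κ → ℤˣ, (∏ i, ((ε (p i) : ℤ) : R)) *
        (M * (diagonal (fun k => ((ε k : ℤ) : R)) * C)).det =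
      2 ^ Fintype.card κ * ((M.submatrix id p).det * (C.submatrix p id).det) := by
  simp only [det_mul_eq_sum_embedding_det_submatrix_mul_prod M, diagonal_mul, prod_mul_distrib,
    mul_sum]
  rw [sum_comm]
  have orthogonality (q : ι ↪ κ) :
      ∑ ε : κ → ℤˣ, (∏ i, ((ε (p i) : ℤ) : R)) *
          ((M.submatrix id q).det * ((∏ i, ((ε (q i) : ℤ) : R)) * ∏ i, C (q i) i)) =
        if univ.map q = univ.map p then
          2 ^ Fintype.card κ * ((M.submatrix id q).det * ∏ i, C (q i) i) else 0 := by
    calc _ = ∑ ε : κ → ℤˣ, ((∏ k ∈ univ.map q, ((ε k : ℤ) : R)) *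
              ∏ k ∈ univ.map p, ((ε k : ℤ) : R)) * ((M.submatrix id q).det * ∏ i, C (q i) i) := by
          refine sum_congr rfl fun ε _ => ?_
          rw [prod_map, prod_map]
          ring
      _ = _ := by rw [← sum_mul, sum_units_prod_mul_prod]; split_ifs <;> simp
  rw [sum_congr rfl fun q _ => orthogonality q, Embedding.sum_ite_map_univ_eq, ← mul_sum]
  congr 1
  rw [det_apply' (C.submatrix p id), mul_sum]
  refine sum_congr rfl fun τ _ => ?_
  change (M.submatrix id (p ∘ τ)).det * ∏ i, C (p (τ i)) i = _
  rw [det_submatrix_id_comp_perm]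
  simp only [submatrix_apply, id]
  ring

theorem sum_embedding_det_submatrix_sq (M : Matrix ι κ R) :
    ∑ p : ι ↪ κ, (M.submatrix id p).det ^ 2 = (Fintype.card ι).factorial * (M * Mᵀ).det := by
  simp only [← sum_embedding_det_submatrix_mul_det_submatrix, ← transpose_submatrix,
    det_transpose, sq]

theorem card_factorial_mul_sum_units_det_mul_diagonal_mul_sq (M : Matrix ι κ R)
    (C : Matrix κ ι R) :
    (Fintype.card ι).factorial *
        ∑ ε : κ → ℤˣ, (M * (diagonal (fun k => ((ε k : ℤ) : R)) * C)).det ^ 2 =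
      2 ^ Fintype.card κ * ∑ p : ι ↪ κ, ((M.submatrix id p).det * (C.submatrix p id).det) ^ 2 := by
  have signed_minor (ε : κ → ℤˣ) (p : ι ↪ κ) :
      ((diagonal (fun k => ((ε k : ℤ) : R)) * C).submatrix p id).det =
        (∏ i, ((ε (p i) : ℤ) : R)) * (C.submatrix p id).det := by
    rw [show (diagonal (fun k => ((ε k : ℤ) : R)) * C).submatrix p id =
        diagonal (fun i => ((ε (p i) : ℤ) : R)) * C.submatrix p id by ext; simp [diagonal_mul],
      det_mul, det_diagonal]
  calc _ = ∑ ε : κ → ℤˣ, (M * (diagonal (fun k => ((ε k : ℤ) : R)) * C)).det *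
          ((Fintype.card ι).factorial * (M * (diagonal (fun k => ((ε k : ℤ) : R)) * C)).det) := by
        rw [mul_sum]; exact sum_congr rfl fun ε _ => by ring
    _ = ∑ p : ι ↪ κ, (M.submatrix id p).det * (C.submatrix p id).det *
          ∑ ε : κ → ℤˣ, (∏ i, ((ε (p i) : ℤ) : R)) *
            (M * (diagonal (fun k => ((ε k : ℤ) : R)) * C)).det := by
        simp only [← sum_embedding_det_submatrix_mul_det_submatrix, signed_minor, mul_sum]
        rw [sum_comm]
        exact sum_congr rfl fun p _ => sum_congr rfl fun ε _ => by ring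
    _ = _ := by
        simp only [sum_units_prod_mul_det_mul_diagonal_mul, mul_sum]
        exact sum_congr rfl fun p _ => by ring

end

section

variable {K ι κ : Type*} [Field K] [CharZero K] [Fintype ι] [DecidableEq ι] [Fintype κ]
  [DecidableEq κ]

theorem choose_mul_sum_perm_sum_units_det_sq (M : Matrix ι κ K) (C : Matrix κ ι K) :
    (Fintype.card κ).choose (Fintype.card ι) * ∑ π : Equiv.Perm κ, ∑ ε : κ → ℤˣ,
        (M * (diagonal (fun k => ((ε k : ℤ) : K)) * C.submatrix π id)).det ^ 2 =
      2 ^ Fintype.card κ * (Fintype.card κ).factorial * (M * Mᵀ).det * (Cᵀ * C).det := by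
  have hC := sum_embedding_det_submatrix_sq Cᵀ
  simp only [← transpose_submatrix, det_transpose, transpose_transpose] at hC
  set m := Fintype.card ι
  set N := Fintype.card κ
  have orbit (p : ι ↪ κ) : (N.descFactorial m : K) * ∑ π : Equiv.Perm κ,
      (C.submatrix (π • p) id).det ^ 2 = N.factorial * ∑ r : ι ↪ κ, (C.submatrix r id).det ^ 2 := by
    have : MulAction.IsPretransitive (Equiv.Perm κ) (ι ↪ κ) :=
      ⟨Equiv.Perm.exists_smul_eq_embedding⟩
    have := MulAction.card_nsmul_sum_smul_eq (G := Equiv.Perm κ)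
      (fun r : ι ↪ κ => (C.submatrix r id).det ^ 2) p
    rwa [Fintype.card_embedding_eq, Fintype.card_perm, nsmul_eq_mul, nsmul_eq_mul] at this
  have signs (π : Equiv.Perm κ) : (m.factorial : K) * ∑ ε : κ → ℤˣ,
      (M * (diagonal (fun k => ((ε k : ℤ) : K)) * C.submatrix π id)).det ^ 2 =
        2 ^ N * ∑ p : ι ↪ κ, (M.submatrix id p).det ^ 2 * (C.submatrix (π • p) id).det ^ 2 := by
    rw [card_factorial_mul_sum_units_det_mul_diagonal_mul_sq]
    simp only [submatrix_submatrix, mul_pow]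
    rfl
  have hm : (m.factorial : K) * m.factorial ≠ 0 := by simp [Nat.factorial_ne_zero]
  refine mul_left_cancel₀ hm ?_
  calc _ = (N.descFactorial m : K) * ∑ π : Equiv.Perm κ, m.factorial * ∑ ε : κ → ℤˣ,
        (M * (diagonal (fun k => ((ε k : ℤ) : K)) * C.submatrix π id)).det ^ 2 := by
        rw [Nat.descFactorial_eq_factorial_mul_choose, ← mul_sum]
        push_cast
        ring
    _ = 2 ^ N * ∑ p : ι ↪ κ, (M.submatrix id p).det ^ 2 * ((N.descFactorial m : K) *
          ∑ π : Equiv.Perm κ, (C.submatrix (π • p) id).det ^ 2) := by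
        simp only [signs, mul_sum]
        rw [sum_comm]
        exact sum_congr rfl fun p _ => sum_congr rfl fun π _ => by ring
    _ = _ := by
        simp only [orbit, hC, ← sum_mul, sum_embedding_det_submatrix_sq]
        ring

end

end Matrix

/-- Let `A` be an `m × N` real matrix with orthonormal rows and `B` an `N × m` real matrix
with orthonormal columns. Then the average over all `2^N · N!` signed permutations `s` of
`det²(A ⬝ (sB))` equals `1/(N choose m)`. -/
theorem average_det_sq_signed_perm_eq (N m : ℕ)
    (A : Matrix (Fin m) (Fin N) ℝ) (hA : A * Aᵀ = 1)
    (B : Matrix (Fin N) (Fin m) ℝ) (hB : Bᵀ * B = 1) :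
    (∑ π : Equiv.Perm (Fin N), ∑ ε : Fin N → ℤˣ,
        (A * signedPermCols π ε B).det ^ 2) / (2 ^ N * N.factorial) =
      1 / (N.choose m : ℝ) := by
  have diagonal_mul_submatrix (π : Equiv.Perm (Fin N)) (ε : Fin N → ℤˣ) :
      diagonal (fun k => ((ε k : ℤ) : ℝ)) * B.submatrix π id = signedPermCols π ε B := by
    ext
    simp [signedPermCols, diagonal_mul]
  have key := choose_mul_sum_perm_sum_units_det_sq A B
  simp only [Fintype.card_fin, hA, hB, det_one, mul_one, diagonal_mul_submatrix] at key
  have hchoose : (N.choose m : ℝ) ≠ 0 := by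
    intro h
    rw [h, zero_mul] at key
    exact (by positivity : (0 : ℝ) < 2 ^ N * N.factorial).ne key
  rw [div_eq_div_iff (by positivity) hchoose]
  linear_combination key

end
end

section
/- Let B be any N×m real matrix, and let S and S' be two distinct m-element subsets of {1,…,N}. For a signed permutation s = (π,ε) of ℝ^N let sB denote the matrix obtained by applying s to each column of B, and let (sB)_S denote the m×m submatrix of sB formed by its rows with indices in S. Then Σ over all 2^N · N! signed permutations s of det((sB)_S) · det((sB)_{S'}) equals 0. -/
open scoped BigOperators Matrix

noncomputable section

/-- Let `B` be any `N × m` real matrix and let `S ≠ S'` be two `m`-element subsets of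
`{1, …, N}`. For a signed permutation `s`, `(sB)_S` denotes the `m × m` submatrix of `sB`
formed by the rows with indices in `S` (taken in increasing order). Then
`Σ_s det((sB)_S) · det((sB)_{S'}) = 0`, the sum being over all `2^N · N!` signed
permutations. -/
theorem sum_det_mul_det_signed_perm_eq_zero (N m : ℕ)
    (B : Matrix (Fin N) (Fin m) ℝ) (S S' : Finset (Fin N))
    (hS : S.card = m) (hS' : S'.card = m) (hne : S ≠ S') :
    ∑ π : Equiv.Perm (Fin N), ∑ ε : Fin N → ℤˣ,
        ((signedPermCols π ε B).submatrix (fun i => (S.orderIsoOfFin hS i : Fin N)) id).det *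
        ((signedPermCols π ε B).submatrix (fun i => (S'.orderIsoOfFin hS' i : Fin N)) id).det
      = 0 := by
  -- Find an element of S not in S'
  obtain ⟨i0, hi0S, hi0S'⟩ : ∃ i0, i0 ∈ S ∧ i0 ∉ S' := by
    by_contra h
    push_neg at h
    exact hne (Finset.eq_of_subset_of_card_le (fun x hx => h x hx) (by omega))
  apply Finset.sum_eq_zero
  intro π _
  set fS : Fin m → Fin N := fun i => (S.orderIsoOfFin hS i : Fin N) with hfS
  set fS' : Fin m → Fin N := fun i => (S'.orderIsoOfFin hS' i : Fin N) with hfS'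
  set F : (Fin N → ℤˣ) → ℝ := fun ε =>
      ((signedPermCols π ε B).submatrix fS id).det *
      ((signedPermCols π ε B).submatrix fS' id).det with hF
  show ∑ ε, F ε = 0
  -- the flipping involution
  have hinv : Function.Involutive
      (fun ε : Fin N → ℤˣ => Function.update ε i0 (-(ε i0))) := by
    intro ε
    simp [Function.update_idem]
  set e : (Fin N → ℤˣ) ≃ (Fin N → ℤˣ) := hinv.toPerm _ with he
  set k0 : Fin m := (S.orderIsoOfFin hS).symm ⟨i0, hi0S⟩ with hk0
  have hfk0 : fS k0 = i0 :=
    congrArg Subtype.val ((S.orderIsoOfFin hS).apply_symm_apply ⟨i0, hi0S⟩)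
  have key : ∀ ε, F (e ε) = - F ε := by
    intro ε
    have h1 : (signedPermCols π (e ε) B).submatrix fS id
        = Matrix.updateRow ((signedPermCols π ε B).submatrix fS id) k0
          ((-1 : ℝ) • ((signedPermCols π ε B).submatrix fS id) k0) := by
      ext i j
      by_cases hi : i = k0
      · subst hi
        simp [Matrix.updateRow_self, signedPermCols, hfk0, he,
          Function.Involutive.toPerm, Function.update_self]
      · have hne' : fS i ≠ i0 := by
          rw [← hfk0]
          intro hcon
          exact hi ((S.orderIsoOfFin hS).injective (Subtype.ext hcon))
        simp [Matrix.updateRow_ne hi, signedPermCols, he,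
          Function.Involutive.toPerm, Function.update_of_ne hne']
    have h2 : (signedPermCols π (e ε) B).submatrix fS' id
        = (signedPermCols π ε B).submatrix fS' id := by
      ext i j
      have hne' : fS' i ≠ i0 := by
        intro hcon
        exact hi0S' (hcon ▸ (S'.orderIsoOfFin hS' i).2)
      simp [signedPermCols, he, Function.Involutive.toPerm, Function.update_of_ne hne']
    simp only [hF, h1, h2, Matrix.det_updateRow_smul, Matrix.updateRow_eq_self]
    ring
  have hsum : ∑ ε, F (e ε) = ∑ ε, F ε := e.sum_comp F
  have hneg : ∑ ε, F (e ε) = - ∑ ε, F ε := by simp [key]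
  linarith [hsum, hneg]

end
end
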